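/- arXiv:1912.09285 — 5 statements merged into one kernel-verified Lean document; each statement's English description precedes it below -/
import Mathlib

section
/- Let p ≥ 1, c > 0, b ∈ ℝ, and define M(x) = x² - 2bx + c|x|^p on ℝ. Then M attains a minimum on ℝ, and the minimizer is S_{c,p}(b), where S_{c,p}(t) = F_{c,p}^{-1}(t) if p > 1 (with F_{c,p}(t) = t + (cp/2)·sign(t)·|t|^{p-1}), and for p = 1: S_{c,1}(t) = t - c/2 if t > c/2, S_{c,1}(t) = 0 if |t| ≤ c/2, and S_{c,1}(t) = t + c/2 if t < -c/2. -/
/-- The function `F_{c,p}(t) = t + (c p / 2) · sign t · |t|^(p-1)`. -/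
noncomputable def Fcp (c p : ℝ) (t : ℝ) : ℝ :=
  t + (c * p / 2) * Real.sign t * |t| ^ (p - 1)

/-- The shrinkage function `S_{c,p}`: the inverse of `F_{c,p}` for `p > 1`,
and soft-thresholding with threshold `c/2` for `p = 1`. -/
noncomputable def Scp (c p : ℝ) (t : ℝ) : ℝ :=
  if p = 1 then
    if t > c / 2 then t - c / 2
    else if t < -(c / 2) then t + c / 2
    else 0
  else Function.invFun (Fcp c p) t

/-!
For `p > 1` the point `s = S_{c,p}(b)` satisfies `F_{c,p}(s) = b`, which is the first-order
condition `M'(s) = 0`; since `t ↦ |t|^p` lies above its tangent line at `s`, with slope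
`p · sign s · |s|^(p-1)`, this gives `M(x) - M(s) ≥ (x - s)² ≥ 0`. The equation `F_{c,p}(s) = b`
is solvable because `F_{c,p}` is continuous, `F_{c,p}(t) ≥ t` for `t ≥ 0` and `F_{c,p}(t) ≤ t`
for `t ≤ 0`. For `p = 1` the soft-thresholding minimizer is checked case by case.
-/

open Real Filter

namespace Real

theorem sign_mul_le_abs (r x : ℝ) : sign r * x ≤ |x| := by
  rcases sign_apply_eq r with h | h | h <;> rw [h]
  · linarith [neg_abs_le x]
  · simp
  · linarith [le_abs_self x]

theorem sign_mul_self (r : ℝ) : sign r * r = |r| := by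
  rcases lt_trichotomy r 0 with h | rfl | h
  · rw [sign_of_neg h, abs_of_neg h]; ring
  · simp
  · rw [sign_of_pos h, abs_of_pos h]; ring

theorem sign_nonneg {r : ℝ} (hr : 0 ≤ r) : 0 ≤ sign r := by
  rcases hr.eq_or_lt with rfl | h
  · simp
  · simp [sign_of_pos h]

theorem sign_nonpos {r : ℝ} (hr : r ≤ 0) : sign r ≤ 0 := by
  simpa [sign_neg] using sign_nonneg (neg_nonneg.mpr hr)

theorem rpow_add_mul_rpow_sub_le {a s p : ℝ} (ha : 0 ≤ a) (hs : 0 ≤ s) (hp : 1 ≤ p) :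
    s ^ p + p * s ^ (p - 1) * (a - s) ≤ a ^ p := by
  rcases hs.eq_or_lt with rfl | hs
  · rcases hp.eq_or_lt with rfl | hp
    · simp
    · rw [zero_rpow (by linarith), zero_rpow (by linarith)]
      simpa using rpow_nonneg ha p
  · -- Bernoulli's inequality for `(a / s) ^ p`, scaled by `s ^ p`
    have bernoulli := one_add_mul_self_le_rpow_one_add
      (s := a / s - 1) (by linarith [div_nonneg ha hs.le]) hp
    rw [add_sub_cancel, div_rpow ha hs.le] at bernoulli
    have hsp : 0 < s ^ p := rpow_pos_of_pos hs p
    have hsp' : s ^ p = s ^ (p - 1) * s := by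
      rw [← rpow_add_one hs.ne']; ring_nf
    calc s ^ p + p * s ^ (p - 1) * (a - s) = s ^ p * (1 + p * (a / s - 1)) := by
          rw [hsp']; field_simp
      _ ≤ s ^ p * (a ^ p / s ^ p) := by gcongr
      _ = a ^ p := mul_div_cancel₀ _ hsp.ne'

theorem abs_rpow_add_mul_sign_le (s x : ℝ) {p : ℝ} (hp : 1 ≤ p) :
    |s| ^ p + p * sign s * |s| ^ (p - 1) * (x - s) ≤ |x| ^ p :=
  calc |s| ^ p + p * sign s * |s| ^ (p - 1) * (x - s)
      = |s| ^ p + p * |s| ^ (p - 1) * (sign s * x - sign s * s) := by ring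
    _ ≤ |s| ^ p + p * |s| ^ (p - 1) * (|x| - |s|) := by
        rw [sign_mul_self]
        gcongr
        exact sign_mul_le_abs s x
    _ ≤ |x| ^ p := rpow_add_mul_rpow_sub_le (abs_nonneg x) (abs_nonneg s) hp

theorem sign_mul_abs_rpow_eq {q : ℝ} (hq : 0 < q) (t : ℝ) :
    sign t * |t| ^ q = max t 0 ^ q - max (-t) 0 ^ q := by
  rcases lt_trichotomy t 0 with h | rfl | h
  · rw [sign_of_neg h, abs_of_neg h, max_eq_right h.le, max_eq_left (by linarith),
      zero_rpow hq.ne']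
    ring
  · simp
  · rw [sign_of_pos h, abs_of_pos h, max_eq_left h.le, max_eq_right (by linarith),
      zero_rpow hq.ne']
    ring

theorem continuous_sign_mul_abs_rpow {q : ℝ} (hq : 0 < q) :
    Continuous fun t : ℝ => sign t * |t| ^ q := by
  simp only [sign_mul_abs_rpow_eq hq]
  exact ((continuous_id.max continuous_const).rpow_const fun _ => Or.inr hq.le).sub
    ((continuous_neg.max continuous_const).rpow_const fun _ => Or.inr hq.le)

end Real

section Fcp

variable {c p : ℝ}

theorem continuous_Fcp (hp : 1 < p) : Continuous (Fcp c p) := by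
  unfold Fcp
  simp only [mul_assoc]
  exact continuous_id.add (continuous_const.mul (continuous_sign_mul_abs_rpow (by linarith)))

theorem le_Fcp_of_nonneg (hc : 0 ≤ c) (hp : 0 ≤ p) {t : ℝ} (ht : 0 ≤ t) : t ≤ Fcp c p t := by
  have := mul_nonneg (mul_nonneg (by positivity : 0 ≤ c * p / 2) (sign_nonneg ht))
    (rpow_nonneg (abs_nonneg t) (p - 1))
  unfold Fcp
  linarith

theorem Fcp_le_of_nonpos (hc : 0 ≤ c) (hp : 0 ≤ p) {t : ℝ} (ht : t ≤ 0) : Fcp c p t ≤ t := by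
  have := mul_nonpos_of_nonpos_of_nonneg
    (mul_nonpos_of_nonneg_of_nonpos (by positivity : 0 ≤ c * p / 2) (sign_nonpos ht))
    (rpow_nonneg (abs_nonneg t) (p - 1))
  unfold Fcp
  linarith

theorem surjective_Fcp (hc : 0 ≤ c) (hp : 1 < p) : Function.Surjective (Fcp c p) := by
  refine (continuous_Fcp hp).surjective ?_ ?_
  · refine tendsto_atTop_mono' _ ?_ tendsto_id
    filter_upwards [eventually_ge_atTop 0] with t ht
    exact le_Fcp_of_nonneg hc (by linarith) ht
  · refine tendsto_atBot_mono' _ ?_ tendsto_id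
    filter_upwards [eventually_le_atBot 0] with t ht
    exact Fcp_le_of_nonpos hc (by linarith) ht

theorem Fcp_Scp (hc : 0 ≤ c) (hp : 1 < p) (b : ℝ) : Fcp c p (Scp c p b) = b := by
  rw [Scp, if_neg hp.ne']
  exact Function.invFun_eq (surjective_Fcp hc hp b)

theorem sq_sub_mul_add_abs_rpow_le_of_Fcp_eq (hc : 0 ≤ c) (hp : 1 ≤ p) {s b : ℝ}
    (hs : Fcp c p s = b) (x : ℝ) :
    s ^ 2 - 2 * b * s + c * |s| ^ p ≤ x ^ 2 - 2 * b * x + c * |x| ^ p := by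
  subst hs
  unfold Fcp
  linarith [sq_nonneg (x - s), mul_le_mul_of_nonneg_left (abs_rpow_add_mul_sign_le s x hp) hc]

end Fcp

theorem sq_sub_mul_add_abs_Scp_one_le {c : ℝ} (hc : 0 ≤ c) (b x : ℝ) :
    Scp c 1 b ^ 2 - 2 * b * Scp c 1 b + c * |Scp c 1 b| ≤ x ^ 2 - 2 * b * x + c * |x| := by
  rw [Scp, if_pos rfl]
  have := neg_abs_le x
  have := le_abs_self x
  split_ifs with hpos hneg
  · rw [abs_of_pos (by linarith)]
    nlinarith [sq_nonneg (x - (b - c / 2))]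
  · rw [abs_of_neg (by linarith)]
    nlinarith [sq_nonneg (x - (b + c / 2))]
  · simp only [abs_zero]
    nlinarith

/-- The minimizer of `M(x) = x² - 2 b x + c |x|^p` is `S_{c,p}(b)`. -/
theorem stmt_0 (p c b : ℝ) (hp : 1 ≤ p) (hc : 0 < c) :
    ∀ x : ℝ,
      (Scp c p b) ^ 2 - 2 * b * (Scp c p b) + c * |Scp c p b| ^ p
        ≤ x ^ 2 - 2 * b * x + c * |x| ^ p := by
  intro x
  rcases hp.eq_or_lt with rfl | hp
  · simpa only [rpow_one] using sq_sub_mul_add_abs_Scp_one_le hc.le b x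
  · exact sq_sub_mul_add_abs_rpow_le_of_Fcp_eq hc.le hp.le (Fcp_Scp hc.le hp b) x
end

section
/- For p ≥ 1, w > 0, and all x ∈ ℝ, the shrinkage function satisfies |S_{w,p}(x) - x| ≤ (wp/2)·|x|^{p-1}. -/
lemma exists_f_nonneg (k q x : ℝ) (hk : 0 ≤ k) (hq : 0 < q) (hx : 0 ≤ x) :
    ∃ s, s + k * Real.sign s * |s| ^ q = x := by
  have hcont : ContinuousOn (fun s : ℝ => s + k * s ^ q) (Set.Icc 0 x) := by
    apply ContinuousOn.add continuousOn_id
    apply ContinuousOn.mul continuousOn_const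
    intro y _
    exact (Real.continuousAt_rpow_const y q (Or.inr hq.le)).continuousWithinAt
  have h0 : (fun s : ℝ => s + k * s ^ q) 0 = 0 := by
    simp [Real.zero_rpow hq.ne']
  have hxv : x ≤ (fun s : ℝ => s + k * s ^ q) x := by
    simp only
    nlinarith [Real.rpow_nonneg hx q]
  have := intermediate_value_Icc hx hcont
  have hmem : x ∈ Set.Icc ((fun s : ℝ => s + k * s ^ q) 0) ((fun s : ℝ => s + k * s ^ q) x) := by
    rw [h0]; exact ⟨hx, hxv⟩
  obtain ⟨s, hs, hsx⟩ := this hmem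
  refine ⟨s, ?_⟩
  rcases eq_or_lt_of_le hs.1 with h | h
  · simp only [← h] at hsx ⊢
    simpa [Real.sign_zero] using by simpa [Real.zero_rpow hq.ne'] using hsx
  · rw [Real.sign_of_pos h, abs_of_pos h]
    simpa using hsx

lemma exists_f (k q : ℝ) (hk : 0 ≤ k) (hq : 0 < q) (x : ℝ) :
    ∃ s, s + k * Real.sign s * |s| ^ q = x := by
  rcases le_or_gt 0 x with hx | hx
  · exact exists_f_nonneg k q x hk hq hx
  · obtain ⟨s, hs⟩ := exists_f_nonneg k q (-x) hk hq (by linarith)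
    refine ⟨-s, ?_⟩
    rw [Real.sign_neg, abs_neg]
    linarith

/-- `|S_{w,p}(x) - x| ≤ (w p / 2) |x|^(p-1)`. -/
theorem stmt_3 (p w : ℝ) (hp : 1 ≤ p) (hw : 0 < w) :
    ∀ x : ℝ, |Scp w p x - x| ≤ (w * p / 2) * |x| ^ (p - 1) := by
  intro x
  by_cases hp1 : p = 1
  · subst hp1
    simp only [Scp, if_pos rfl, sub_self, Real.rpow_zero, mul_one]
    split_ifs with h0 h1 h2
    · rw [abs_of_nonpos (by linarith)]; linarith
    · rw [abs_of_nonneg (by linarith)]; linarith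
    · push_neg at h1 h2
      rw [zero_sub, abs_neg]
      exact abs_le.mpr ⟨by linarith, h1⟩
    all_goals exact absurd trivial h0
  · have hq : 0 < p - 1 := by
      rcases lt_or_eq_of_le hp with h | h
      · linarith
      · exact absurd h.symm hp1
    set k := w * p / 2 with hk
    have hkpos : 0 < k := by positivity
    obtain ⟨s0, hs0⟩ := exists_f k (p - 1) hkpos.le hq x
    have hF : Fcp w p (Scp w p x) = x := by
      rw [Scp, if_neg hp1]
      exact Function.invFun_eq ⟨s0, hs0⟩
    set s := Scp w p x with hsdef
    have heq : s + k * Real.sign s * |s| ^ (p - 1) = x := hF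
    have habs : |s| ≤ |x| := by
      rcases lt_trichotomy s 0 with h | h | h
      · rw [Real.sign_of_neg h] at heq
        have hx : x ≤ s := by nlinarith [Real.rpow_nonneg (abs_nonneg s) (p - 1)]
        rw [abs_of_neg h, abs_of_neg (lt_of_le_of_lt hx h)]
        linarith
      · simp [h]
      · rw [Real.sign_of_pos h] at heq
        have hx : s ≤ x := by nlinarith [Real.rpow_nonneg (abs_nonneg s) (p - 1)]
        rw [abs_of_pos h, abs_of_pos (lt_of_lt_of_le h hx)]
        linarith
    have hpow : |s| ^ (p - 1) ≤ |x| ^ (p - 1) :=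
      Real.rpow_le_rpow (abs_nonneg s) habs hq.le
    have : s - x = -(k * Real.sign s * |s| ^ (p - 1)) := by linarith
    rw [this, abs_neg, abs_mul, abs_mul, abs_of_pos hkpos]
    have hsign : |Real.sign s| ≤ 1 := by
      rcases Real.sign_apply_eq s with h | h | h <;> simp [h]
    have hpnn : 0 ≤ |s| ^ (p - 1) := Real.rpow_nonneg (abs_nonneg s) (p - 1)
    rw [abs_of_nonneg hpnn]
    calc k * |Real.sign s| * |s| ^ (p - 1) ≤ k * 1 * |s| ^ (p - 1) := by
          apply mul_le_mul_of_nonneg_right _ hpnn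
          exact mul_le_mul_of_nonneg_left hsign hkpos.le
      _ = k * |s| ^ (p - 1) := by ring
      _ ≤ k * |x| ^ (p - 1) := mul_le_mul_of_nonneg_left hpow hkpos.le
end

section
/- Let H be a Hilbert space, A: H → H nonexpansive (‖A(v)-A(v')‖ ≤ ‖v-v'‖ for all v,v'), and v₀ ∈ H such that ‖A^{n+1}(v₀) - A^n(v₀)‖ → 0 as n → ∞. If some subsequence (A^{n_k}(v₀)) converges weakly to v' ∈ H, then A(v') = v'. -/
open Filter
open scoped Topology RealInnerProductSpace

/-!
Write `x k` for `A^[nk k] v₀` and `b = v' - A v'`. Expanding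
`‖x k - A v'‖² = ‖x k - v'‖² + 2⟪x k - v', b⟫ + ‖b‖²` and bounding the left side by nonexpansiveness,
`‖x k - A v'‖ ≤ ‖A (x k) - x k‖ + ‖x k - v'‖`, gives
`‖b‖² ≤ ε_k² + 2 ε_k ‖x k - v'‖ - 2⟪x k - v', b⟫` with `ε_k = ‖A (x k) - x k‖ → 0`.
The weakly convergent sequence `x` is bounded (uniform boundedness), so the right side tends to `0`,
whence `b = 0`.
-/

section

variable {H : Type*} [NormedAddCommGroup H] [InnerProductSpace ℝ H]

theorem exists_norm_le_of_tendsto_inner [CompleteSpace H] {x : ℕ → H} {y : H}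
    (hx : ∀ u, Tendsto (fun k => ⟪u, x k⟫) atTop (𝓝 ⟪u, y⟫)) : ∃ C, ∀ k, ‖x k‖ ≤ C := by
  obtain ⟨C, hC⟩ : ∃ C, ∀ k, ‖innerSL ℝ (x k)‖ ≤ C := by
    refine banach_steinhaus fun u => ?_
    obtain ⟨C, hC⟩ := isBounded_iff_forall_norm_le.mp (Metric.isBounded_range_of_tendsto _ (hx u))
    exact ⟨C, fun k => by simpa [real_inner_comm] using hC _ ⟨k, rfl⟩⟩
  exact ⟨C, fun k => by simpa using hC k⟩

theorem LipschitzWith.norm_sub_apply_sq_le {A : H → H} (hA : LipschitzWith 1 A) (x v : H) :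
    ‖v - A v‖ ^ 2 ≤ ‖A x - x‖ ^ 2 + 2 * ‖A x - x‖ * ‖x - v‖ - 2 * ⟪x - v, v - A v⟫ := by
  have hle : ‖x - A v‖ ≤ ‖A x - x‖ + ‖x - v‖ :=
    calc ‖x - A v‖ ≤ ‖x - A x‖ + ‖A x - A v‖ := norm_sub_le_norm_sub_add_norm_sub _ _ _
      _ ≤ ‖A x - x‖ + ‖x - v‖ := by
        rw [norm_sub_rev x]
        gcongr
        simpa [dist_eq_norm] using hA.dist_le_mul x v
  have hexpand : ‖x - A v‖ ^ 2 = ‖x - v‖ ^ 2 + 2 * ⟪x - v, v - A v⟫ + ‖v - A v‖ ^ 2 := by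
    rw [← norm_add_sq_real, sub_add_sub_cancel]
  nlinarith [norm_nonneg (x - A v)]

theorem LipschitzWith.isFixedPt_of_tendsto_inner [CompleteSpace H] {A : H → H}
    (hA : LipschitzWith 1 A) {x : ℕ → H} {v : H}
    (hfix : Tendsto (fun k => ‖A (x k) - x k‖) atTop (𝓝 0))
    (hweak : ∀ u, Tendsto (fun k => ⟪u, x k⟫) atTop (𝓝 ⟪u, v⟫)) :
    Function.IsFixedPt A v := by
  obtain ⟨C, hC⟩ := exists_norm_le_of_tendsto_inner hweak
  have hbdd : IsBoundedUnder (· ≤ ·) atTop (fun k => ‖‖x k - v‖‖) :=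
    isBoundedUnder_of ⟨C + ‖v‖, fun k => by
      simpa using (_root_.norm_sub_le _ _).trans (add_le_add_left (hC k) _)⟩
  have hinner : Tendsto (fun k => ⟪x k - v, v - A v⟫) atTop (𝓝 0) := by
    have h := (hweak (v - A v)).sub_const ⟪v - A v, v⟫
    rw [sub_self] at h
    exact h.congr fun k => by rw [← inner_sub_right, real_inner_comm]
  have hbound : Tendsto (fun k => ‖A (x k) - x k‖ ^ 2 + 2 * ‖A (x k) - x k‖ * ‖x k - v‖
      - 2 * ⟪x k - v, v - A v⟫) atTop (𝓝 0) := by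
    have hmul := (hfix.zero_mul_isBoundedUnder_le hbdd).const_mul 2
    simpa [mul_assoc] using ((hfix.pow 2).add hmul).sub (hinner.const_mul 2)
  have hsq : ‖v - A v‖ ^ 2 ≤ 0 := ge_of_tendsto' hbound fun k => hA.norm_sub_apply_sq_le (x k) v
  have : v - A v = 0 := by simpa using hsq
  exact (sub_eq_zero.mp this).symm

end

/-- Demiclosedness: if `A` is nonexpansive on a Hilbert space, the successive
differences of the orbit of `v₀` tend to `0`, and some subsequence of the orbit
converges weakly to `v'`, then `v'` is a fixed point of `A`. -/
theorem stmt_8 {H : Type*} [NormedAddCommGroup H] [InnerProductSpace ℝ H] [CompleteSpace H]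
    (A : H → H) (hA : ∀ v v' : H, ‖A v - A v'‖ ≤ ‖v - v'‖) (v₀ : H)
    (hdiff : Tendsto (fun n => ‖A^[n + 1] v₀ - A^[n] v₀‖) atTop (𝓝 0))
    (nk : ℕ → ℕ) (hnk : StrictMono nk) (v' : H)
    (hweak : ∀ u : H,
      Tendsto (fun k => (inner ℝ u (A^[nk k] v₀) : ℝ)) atTop (𝓝 (inner ℝ u v' : ℝ))) :
    A v' = v' := by
  have hLip : LipschitzWith 1 A := LipschitzWith.of_dist_le_mul fun v w => by
    simpa [dist_eq_norm] using hA v w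
  refine hLip.isFixedPt_of_tendsto_inner (x := fun k => A^[nk k] v₀) ?_ hweak
  simpa [Function.comp_def, Function.iterate_succ_apply'] using hdiff.comp hnk.tendsto_atTop
end

section
/- Let n ≥ 1, p_i ≥ 1 and c_i > 0 for i = 1,…,n, b ∈ ℝ, and M(x) = x² - 2bx + Σ_{i=1}^n c_i|x|^{p_i}. Let B = {i : p_i = 1}. If B ≠ ∅ and |b| ≤ (Σ_{i∈B} c_i)/2, then x = 0 is a global minimizer of M on ℝ. -/
open scoped Classical

/-! The linear terms (`p i = 1`) contribute `(∑_{i∈B} c_i) |x| ≥ 2|b||x| ≥ 2bx`, which absorbs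
the linear part `-2bx` of `M`; the remaining terms and `x²` are nonnegative, while every term
of `M(0)` vanishes because all exponents are positive. -/

namespace PowerPenalty

variable {ι : Type*} [Fintype ι]

theorem sum_mul_abs_zero_rpow (c p : ι → ℝ) (hp : ∀ i, p i ≠ 0) :
    ∑ i, c i * |(0 : ℝ)| ^ p i = 0 :=
  Finset.sum_eq_zero fun i _ => by rw [abs_zero, Real.zero_rpow (hp i), mul_zero]

theorem sum_filter_eq_one_mul_abs_le (c p : ι → ℝ) (hc : ∀ i, 0 ≤ c i) (x : ℝ) :
    (∑ i ∈ Finset.univ.filter (fun i => p i = 1), c i) * |x| ≤ ∑ i, c i * |x| ^ p i := by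
  calc (∑ i ∈ Finset.univ.filter (fun i => p i = 1), c i) * |x|
      = ∑ i ∈ Finset.univ.filter (fun i => p i = 1), c i * |x| ^ p i := by
        rw [Finset.sum_mul]
        refine Finset.sum_congr rfl fun i hi => ?_
        rw [(Finset.mem_filter.mp hi).2, Real.rpow_one]
    _ ≤ ∑ i, c i * |x| ^ p i :=
        Finset.sum_le_sum_of_subset_of_nonneg (Finset.filter_subset _ _) fun i _ _ =>
          mul_nonneg (hc i) (Real.rpow_nonneg (abs_nonneg x) _)

theorem two_mul_mul_le_mul_abs {b C : ℝ} (hb : |b| ≤ C / 2) (x : ℝ) :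
    2 * b * x ≤ C * |x| :=
  calc 2 * b * x ≤ 2 * (|b| * |x|) := by
        rw [← abs_mul]; linarith [le_abs_self (b * x)]
    _ ≤ C * |x| := by nlinarith [abs_nonneg x]

end PowerPenalty

theorem stmt_17_general {n : ℕ} (c p : Fin n → ℝ)
    (hc : ∀ i, 0 < c i) (hp : ∀ i, 1 ≤ p i) (b : ℝ)
    (hb : |b| ≤ (∑ i ∈ Finset.univ.filter (fun i => p i = 1), c i) / 2) :
    ∀ x : ℝ,
      (0 : ℝ) ^ 2 - 2 * b * 0 + ∑ i, c i * |(0 : ℝ)| ^ p i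
        ≤ x ^ 2 - 2 * b * x + ∑ i, c i * |x| ^ p i := by
  intro x
  rw [PowerPenalty.sum_mul_abs_zero_rpow c p fun i => (zero_lt_one.trans_le (hp i)).ne']
  have hlinear := PowerPenalty.two_mul_mul_le_mul_abs hb x
  have hpenalty := PowerPenalty.sum_filter_eq_one_mul_abs_le c p (fun i => (hc i).le) x
  linarith [sq_nonneg x]

/-- For `M(x) = x² - 2bx + Σ c_i |x|^{p_i}` with `B = {i : p_i = 1}` nonempty and
`|b| ≤ (Σ_{i∈B} c_i)/2`, the point `x = 0` is a global minimizer of `M`. -/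
theorem stmt_17 {n : ℕ} (hn : 1 ≤ n) (c p : Fin n → ℝ)
    (hc : ∀ i, 0 < c i) (hp : ∀ i, 1 ≤ p i) (b : ℝ)
    (hBne : (Finset.univ.filter (fun i => p i = 1)).Nonempty)
    (hb : |b| ≤ (∑ i ∈ Finset.univ.filter (fun i => p i = 1), c i) / 2) :
    ∀ x : ℝ,
      (0 : ℝ) ^ 2 - 2 * b * 0 + ∑ i, c i * |(0 : ℝ)| ^ p i
        ≤ x ^ 2 - 2 * b * x + ∑ i, c i * |x| ^ p i :=
  stmt_17_general c p hc hp b hb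
end

section
/- Let n ≥ 1, weights w_i > 0, exponents p_i ≥ 1, B = {i : p_i = 1} nonempty, and let S: ℝ → ℝ denote the generalized thresholding function S_{(w₁,…,w_n),(p₁,…,p_n)} given by: S(t) = 0 for |t| ≤ T := (Σ_{i∈B} w_i)/2, S(t) = F₁^{-1}(t) for t > T, and S(t) = F₂^{-1}(t) for t < -T, where F₁(x) = x + (Σ_{i∈B} w_i + Σ_{i∉B} p_i w_i x^{p_i-1})/2 for x > 0 and F₂(x) = x - (Σ_{i∈B} w_i + Σ_{i∉B} p_i w_i |x|^{p_i-1})/2 for x < 0. Then S is nonexpansive: |S(x) - S(x')| ≤ |x - x'| for all x, x' ∈ ℝ. -/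
/-!
`S` is a resolvent: on `(T, ∞)` it inverts `x ↦ x + g x` and on `(-∞, -T)` it inverts
`x ↦ x - g (-x)`, where `g x = (∑_{i∈B} w_i + ∑_{i∉B} p_i w_i x^{p_i-1}) / 2` is monotone on
`[0, ∞)` and at least `T`. A right inverse `S` of the identity plus a monotone map `φ` is monotone,
and so is its residual `t ↦ t - S t = φ (S t)`. On `[-T, T]` we have `S = 0` and residual `t`,
and the bounds `g ≥ T` make the three pieces fit together, so `S` and `t ↦ t - S t` are both
monotone on `ℝ`. Then `0 ≤ S y - S x ≤ y - x` for `x ≤ y`.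
-/

open Set

section Resolvent

variable {α : Type*} [AddCommGroup α] [LinearOrder α] [IsOrderedAddMonoid α]
  {φ S : α → α} {D I : Set α}

theorem monotoneOn_of_rightInvOn_id_add (hφ : MonotoneOn φ D) (hSD : MapsTo S I D)
    (hS : RightInvOn S (fun x => x + φ x) I) : MonotoneOn S I := by
  have hstrict : StrictMonoOn (fun x => x + φ x) D :=
    fun x hx y hy hxy => add_lt_add_of_lt_of_le hxy (hφ hx hy hxy.le)
  intro a ha b hb hab
  exact (hstrict.le_iff_le (hSD ha) (hSD hb)).1 ((hS ha).trans_le (hab.trans (hS hb).ge))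

theorem monotoneOn_sub_of_rightInvOn_id_add (hφ : MonotoneOn φ D) (hSD : MapsTo S I D)
    (hS : RightInvOn S (fun x => x + φ x) I) : MonotoneOn (fun t => t - S t) I :=
  (hφ.comp (monotoneOn_of_rightInvOn_id_add hφ hSD hS) hSD).congr
    fun _ ht => eq_sub_of_add_eq' (hS ht)

end Resolvent

theorem monotone_of_monotoneOn_Iio_Icc_Ioi {α β : Type*} [LinearOrder α] [Preorder β]
    {f : α → β} {c d : α} {L U : β}
    (hleft : MonotoneOn f (Iio c)) (hmid : MonotoneOn f (Icc c d)) (hright : MonotoneOn f (Ioi d))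
    (hfL : ∀ t < c, f t ≤ L) (hfM : ∀ t ∈ Icc c d, L ≤ f t ∧ f t ≤ U) (hfR : ∀ t > d, U ≤ f t)
    (hLU : L ≤ U) : Monotone f := by
  intro a b hab
  rcases lt_or_ge d a with hda | had
  · exact hright hda (hda.trans_le hab) hab
  rcases lt_or_ge b c with hbc | hcb
  · exact hleft (hab.trans_lt hbc) hbc hab
  rcases lt_or_ge a c with hac | hca <;> rcases lt_or_ge d b with hdb | hbd
  · exact ((hfL a hac).trans hLU).trans (hfR b hdb)
  · exact (hfL a hac).trans (hfM b ⟨hcb, hbd⟩).1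
  · exact (hfM a ⟨hca, had⟩).2.trans (hfR b hdb)
  · exact hmid ⟨hca, had⟩ ⟨hcb, hbd⟩ hab

theorem abs_sub_le_of_monotone_of_monotone_sub {α : Type*} [AddCommGroup α] [LinearOrder α]
    [IsOrderedAddMonoid α] {f : α → α} (hf : Monotone f) (hres : Monotone fun t => t - f t)
    (x y : α) : |f x - f y| ≤ |x - y| := by
  wlog hxy : x ≤ y generalizing x y
  · rw [abs_sub_comm, abs_sub_comm x]
    exact this y x (le_of_not_ge hxy)
  have hres_le : f y - f x ≤ y - x := by
    have := hres hxy
    rw [sub_le_sub_iff] at this ⊢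
    rwa [add_comm]
  rw [abs_sub_comm, abs_sub_comm x]
  exact abs_le_abs hres_le ((neg_nonpos.2 (sub_nonneg.2 (hf hxy))).trans (sub_nonneg.2 hxy))

section Threshold

variable {gneg gpos S : ℝ → ℝ} {T : ℝ}

theorem monotone_of_threshold (hgneg : MonotoneOn gneg (Iio 0)) (hgpos : MonotoneOn gpos (Ioi 0))
    (hS0 : ∀ t ∈ Icc (-T) T, S t = 0) (hSneg : ∀ t < -T, S t < 0 ∧ S t + gneg (S t) = t)
    (hSpos : ∀ t > T, 0 < S t ∧ S t + gpos (S t) = t) : Monotone S :=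
  monotone_of_monotoneOn_Iio_Icc_Ioi (L := 0) (U := 0)
    (monotoneOn_of_rightInvOn_id_add hgneg (fun t ht => (hSneg t ht).1) fun t ht => (hSneg t ht).2)
    (monotoneOn_const.congr fun t ht => (hS0 t ht).symm)
    (monotoneOn_of_rightInvOn_id_add hgpos (fun t ht => (hSpos t ht).1) fun t ht => (hSpos t ht).2)
    (fun t ht => (hSneg t ht).1.le) (fun t ht => ⟨(hS0 t ht).ge, (hS0 t ht).le⟩)
    (fun t ht => (hSpos t ht).1.le) le_rfl

theorem monotone_sub_of_threshold (hT : 0 ≤ T) (hgneg : MonotoneOn gneg (Iio 0))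
    (hgpos : MonotoneOn gpos (Ioi 0)) (hgnegT : ∀ x < 0, gneg x ≤ -T) (hgposT : ∀ x > 0, T ≤ gpos x)
    (hS0 : ∀ t ∈ Icc (-T) T, S t = 0) (hSneg : ∀ t < -T, S t < 0 ∧ S t + gneg (S t) = t)
    (hSpos : ∀ t > T, 0 < S t ∧ S t + gpos (S t) = t) : Monotone fun t => t - S t := by
  have hres_neg : ∀ t < -T, gneg (S t) = t - S t := fun t ht => eq_sub_of_add_eq' (hSneg t ht).2
  have hres_pos : ∀ t > T, gpos (S t) = t - S t := fun t ht => eq_sub_of_add_eq' (hSpos t ht).2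
  refine monotone_of_monotoneOn_Iio_Icc_Ioi (L := -T) (U := T)
    (monotoneOn_sub_of_rightInvOn_id_add hgneg (fun t ht => (hSneg t ht).1)
      fun t ht => (hSneg t ht).2)
    (monotoneOn_id.congr fun t ht => by simp [hS0 t ht])
    (monotoneOn_sub_of_rightInvOn_id_add hgpos (fun t ht => (hSpos t ht).1)
      fun t ht => (hSpos t ht).2)
    (fun t ht => (hres_neg t ht).symm.trans_le (hgnegT _ (hSneg t ht).1))
    (fun t ht => by simpa [hS0 t ht] using ht)
    (fun t ht => (hgposT _ (hSpos t ht).1).trans_eq (hres_pos t ht)) (neg_le_self hT)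

end Threshold

/-- For `x > 0` and `B = {i | p i = 1}` this is the derivative of `x ↦ (∑ i, w i * x ^ p i) / 2`,
so that `F₁ x = x + penaltySlope B w p x`. -/
noncomputable def penaltySlope {ι : Type*} [Fintype ι] [DecidableEq ι] (B : Finset ι)
    (w p : ι → ℝ) (x : ℝ) : ℝ :=
  ((∑ i ∈ B, w i) + ∑ i ∈ Bᶜ, p i * w i * x ^ (p i - 1)) / 2

section PenaltySlope

variable {ι : Type*} [Fintype ι] [DecidableEq ι] (B : Finset ι) {w p : ι → ℝ}

theorem monotoneOn_penaltySlope (hw : ∀ i, 0 ≤ w i) (hp : ∀ i, 1 ≤ p i) :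
    MonotoneOn (penaltySlope B w p) (Ici 0) := fun x hx y _ hxy => by
  have : ∑ i ∈ Bᶜ, p i * w i * x ^ (p i - 1) ≤ ∑ i ∈ Bᶜ, p i * w i * y ^ (p i - 1) :=
    Finset.sum_le_sum fun i _ => mul_le_mul_of_nonneg_left
      (Real.rpow_le_rpow hx hxy (sub_nonneg.2 (hp i))) (mul_nonneg (by linarith [hp i]) (hw i))
  unfold penaltySlope
  linarith

theorem le_penaltySlope (hw : ∀ i, 0 ≤ w i) (hp : ∀ i, 0 ≤ p i) {x : ℝ} (hx : 0 ≤ x) :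
    (∑ i ∈ B, w i) / 2 ≤ penaltySlope B w p x := by
  have : 0 ≤ ∑ i ∈ Bᶜ, p i * w i * x ^ (p i - 1) := Finset.sum_nonneg fun i _ =>
    mul_nonneg (mul_nonneg (hp i) (hw i)) (Real.rpow_nonneg hx _)
  unfold penaltySlope
  linarith

end PenaltySlope

theorem stmt_19_general {n : ℕ} (w p : Fin n → ℝ)
    (hw : ∀ i, 0 < w i) (hp : ∀ i, 1 ≤ p i)
    (B : Finset (Fin n))
    (T : ℝ) (hT : T = (∑ i ∈ B, w i) / 2)
    (F₁ F₂ S : ℝ → ℝ)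
    (hF₁ : ∀ x > (0 : ℝ),
      F₁ x = x + ((∑ i ∈ B, w i) + ∑ i ∈ Bᶜ, p i * w i * x ^ (p i - 1)) / 2)
    (hF₂ : ∀ x < (0 : ℝ),
      F₂ x = x - ((∑ i ∈ B, w i) + ∑ i ∈ Bᶜ, p i * w i * |x| ^ (p i - 1)) / 2)
    (hS0 : ∀ t : ℝ, |t| ≤ T → S t = 0)
    (hSpos : ∀ t : ℝ, T < t → 0 < S t ∧ F₁ (S t) = t)
    (hSneg : ∀ t : ℝ, t < -T → S t < 0 ∧ F₂ (S t) = t) :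
    ∀ x x' : ℝ, |S x - S x'| ≤ |x - x'| := by
  have hw' : ∀ i, 0 ≤ w i := fun i => (hw i).le
  have hg : MonotoneOn (penaltySlope B w p) (Ici 0) := monotoneOn_penaltySlope B hw' hp
  have hgpos : MonotoneOn (penaltySlope B w p) (Ioi 0) := hg.mono Ioi_subset_Ici_self
  have hgT : ∀ x, 0 ≤ x → T ≤ penaltySlope B w p x := fun x hx =>
    hT ▸ le_penaltySlope B hw' (fun i => zero_le_one.trans (hp i)) hx
  have hT0 : 0 ≤ T := hT ▸ div_nonneg (Finset.sum_nonneg fun i _ => hw' i) two_pos.le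
  have hgneg : MonotoneOn (fun x => -penaltySlope B w p (-x)) (Iio 0) := fun x hx y hy hxy =>
    neg_le_neg (hg (mem_Ici.2 (neg_nonneg.2 (le_of_lt hy))) (mem_Ici.2 (neg_nonneg.2 (le_of_lt hx)))
      (neg_le_neg hxy))
  have hSneg' : ∀ t < -T, S t < 0 ∧ S t + -penaltySlope B w p (-S t) = t := fun t ht => by
    obtain ⟨hneg, hF⟩ := hSneg t ht
    have := hF₂ _ hneg
    rw [abs_of_neg hneg, hF] at this
    exact ⟨hneg, by rw [penaltySlope]; linarith⟩
  have hSpos' : ∀ t > T, 0 < S t ∧ S t + penaltySlope B w p (S t) = t := fun t ht => by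
    obtain ⟨hpos, hF⟩ := hSpos t ht
    exact ⟨hpos, (hF₁ _ hpos).symm.trans hF⟩
  have hS0' : ∀ t ∈ Icc (-T) T, S t = 0 := fun t ht => hS0 t (abs_le.2 ht)
  exact abs_sub_le_of_monotone_of_monotone_sub
    (monotone_of_threshold hgneg hgpos hS0' hSneg' hSpos')
    (monotone_sub_of_threshold hT0 hgneg hgpos (fun x hx => neg_le_neg (hgT _ (neg_nonneg.2 hx.le)))
      (fun x hx => hgT x hx.le) hS0' hSneg' hSpos')

/-- Nonexpansiveness of the generalized thresholding function
`S_{(w₁,…,w_n),(p₁,…,p_n)}` when `B = {i : p_i = 1}` is nonempty: `S(t) = 0` for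
`|t| ≤ T = (Σ_{i∈B} w_i)/2`, `S = F₁⁻¹` on `(T,∞)` and `S = F₂⁻¹` on `(-∞,-T)`. -/
theorem stmt_19 {n : ℕ} (hn : 1 ≤ n) (w p : Fin n → ℝ)
    (hw : ∀ i, 0 < w i) (hp : ∀ i, 1 ≤ p i)
    (B : Finset (Fin n)) (hB : B = Finset.univ.filter (fun i => p i = 1))
    (hBne : B.Nonempty)
    (T : ℝ) (hT : T = (∑ i ∈ B, w i) / 2)
    (F₁ F₂ S : ℝ → ℝ)
    (hF₁ : ∀ x > (0 : ℝ),
      F₁ x = x + ((∑ i ∈ B, w i) + ∑ i ∈ Bᶜ, p i * w i * x ^ (p i - 1)) / 2)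
    (hF₂ : ∀ x < (0 : ℝ),
      F₂ x = x - ((∑ i ∈ B, w i) + ∑ i ∈ Bᶜ, p i * w i * |x| ^ (p i - 1)) / 2)
    (hS0 : ∀ t : ℝ, |t| ≤ T → S t = 0)
    (hSpos : ∀ t : ℝ, T < t → 0 < S t ∧ F₁ (S t) = t)
    (hSneg : ∀ t : ℝ, t < -T → S t < 0 ∧ F₂ (S t) = t) :
    ∀ x x' : ℝ, |S x - S x'| ≤ |x - x'| :=
  stmt_19_general w p hw hp B T hT F₁ F₂ S hF₁ hF₂ hS0 hSpos hSneg
end
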